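/- arXiv:2401.00745 — 3 statements merged into one kernel-verified Lean document; each statement's English description precedes it below -/
import Mathlib

section
/- Let t, s ∈ ℂⁿ be unit vectors with ⟨t, s̄⟩ = 0. The complex harmonic plane waves f^{(p,q)}_{t,s}(z) = ⟨z, \overline{s+t}⟩^p ⟨z̄, s−t⟩^q satisfy, with respect to the complex Fischer inner product ⟨P, Q⟩_∂ = [\overline{P(∂)} Q(z)]_{z=0}: ⟨f^{(p,q)}_{t,s}, f^{(w,v)}_{t,s}⟩_∂ = 2^{p+q} p! q! if (p,q) = (w,v) and 0 otherwise. -/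
open Complex Function

/-- The holomorphic coordinate `zⱼ = xⱼ + i x_{n+j}` on `ℝ^{2n} ≅ ℂⁿ`. -/
noncomputable def zc (n : ℕ) (j : Fin n) (x : (Fin n → ℝ) × (Fin n → ℝ)) : ℂ :=
  (x.1 j : ℂ) + Complex.I * (x.2 j : ℂ)

/-- The anti-holomorphic coordinate `z̄ⱼ = xⱼ - i x_{n+j}`. -/
noncomputable def zbarc (n : ℕ) (j : Fin n) (x : (Fin n → ℝ) × (Fin n → ℝ)) : ℂ :=
  (x.1 j : ℂ) - Complex.I * (x.2 j : ℂ)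

/-- The Wirtinger derivative `∂_{zⱼ} = (∂_{xⱼ} - i ∂_{x_{n+j}})/2`. -/
noncomputable def pz (n : ℕ) (j : Fin n) (f : (Fin n → ℝ) × (Fin n → ℝ) → ℂ) :
    (Fin n → ℝ) × (Fin n → ℝ) → ℂ := fun x =>
  (1/2) * (deriv (fun u => f (Function.update x.1 j u, x.2)) (x.1 j)
    - Complex.I * deriv (fun u => f (x.1, Function.update x.2 j u)) (x.2 j))

/-- The Wirtinger derivative `∂_{z̄ⱼ} = (∂_{xⱼ} + i ∂_{x_{n+j}})/2`. -/
noncomputable def pzbar (n : ℕ) (j : Fin n) (f : (Fin n → ℝ) × (Fin n → ℝ) → ℂ) :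
    (Fin n → ℝ) × (Fin n → ℝ) → ℂ := fun x =>
  (1/2) * (deriv (fun u => f (Function.update x.1 j u, x.2)) (x.1 j)
    + Complex.I * deriv (fun u => f (x.1, Function.update x.2 j u)) (x.2 j))

open ComplexConjugate

/-!
The operator `∑ eⱼ ∂_{zⱼ}` kills `z̄` and sends `K (∑ cⱼ zⱼ)^a (∑ dⱼ z̄ⱼ)^b` to
`a (∑ eⱼ cⱼ) K (∑ cⱼ zⱼ)^(a-1) (∑ dⱼ z̄ⱼ)^b`; symmetrically for `∑ e'ⱼ ∂_{z̄ⱼ}`. After `p` and `q`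
steps the value at `0` is `a(a-1)⋯(a-p+1) b(b-1)⋯(b-q+1) (∑ eⱼ cⱼ)^p (∑ e'ⱼ dⱼ)^q 0^(a-p) 0^(b-q)`,
which vanishes unless `(p, q) = (a, b)`: the falling factorial kills `p > a`, the power of `0`
kills `p < a`. For the plane waves both pairings equal `|s ± t|² = 2` by orthonormality.
-/

lemma descFactorial_mul_zero_pow {R : Type*} [Semiring R] (a p : ℕ) :
    (a.descFactorial p : R) * 0 ^ (a - p) = if p = a then (a.factorial : R) else 0 := by
  rcases lt_trichotomy p a with h | rfl | h
  · rw [zero_pow (Nat.sub_ne_zero_of_lt h), mul_zero, if_neg h.ne]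
  · simp [Nat.descFactorial_self]
  · rw [Nat.descFactorial_eq_zero_iff_lt.mpr h, Nat.cast_zero, zero_mul, if_neg h.ne']

lemma hasDerivAt_mul_affine_pow_mul_affine_pow (K A B c d : ℂ) (a b : ℕ) (u₀ : ℝ) :
    HasDerivAt (fun u : ℝ => K * (A + (u - u₀) * c) ^ a * (B + (u - u₀) * d) ^ b)
      (K * (a * c * A ^ (a - 1) * B ^ b + b * d * A ^ a * B ^ (b - 1))) u₀ := by
  have hline : ∀ (A c : ℂ), HasDerivAt (fun ζ : ℂ => A + (ζ - u₀) * c) c u₀ := fun A c => by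
    simpa using (((hasDerivAt_id (u₀ : ℂ)).sub_const (u₀ : ℂ)).mul_const c).const_add A
  refine (((hline A c).pow a).const_mul K |>.mul ((hline B d).pow b)).comp_ofReal.congr_deriv ?_
  simp only [Pi.pow_apply, sub_self, zero_mul, add_zero]
  ring

lemma sum_mul_conj_add_and_sub_eq_two {n : ℕ} {t s : Fin n → ℂ}
    (ht : ∑ j, t j * conj (t j) = 1) (hs : ∑ j, s j * conj (s j) = 1)
    (hts : ∑ j, t j * conj (s j) = 0) :
    ∑ j, (s j + t j) * conj (s j + t j) = 2 ∧ ∑ j, conj (s j - t j) * (s j - t j) = 2 := by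
  have hst : ∑ j, s j * conj (t j) = 0 := by
    simpa [map_sum, mul_comm] using congrArg conj hts
  constructor
  · simp only [map_add, add_mul, mul_add, Finset.sum_add_distrib, ht, hs, hts, hst]
    norm_num
  · simp only [mul_comm (conj _), map_sub, sub_mul, mul_sub, Finset.sum_sub_distrib, ht, hs, hts,
      hst]
    norm_num

section PlaneWaves

variable {n : ℕ}

noncomputable def zForm (c : Fin n → ℂ) (x : (Fin n → ℝ) × (Fin n → ℝ)) : ℂ :=
  ∑ k, zc n k x * c k

noncomputable def zbarForm (d : Fin n → ℂ) (x : (Fin n → ℝ) × (Fin n → ℝ)) : ℂ :=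
  ∑ k, zbarc n k x * d k

noncomputable def pzDir (e : Fin n → ℂ) (f : (Fin n → ℝ) × (Fin n → ℝ) → ℂ) :
    (Fin n → ℝ) × (Fin n → ℝ) → ℂ :=
  fun x => ∑ j, e j * pz n j f x

noncomputable def pzbarDir (e : Fin n → ℂ) (f : (Fin n → ℝ) × (Fin n → ℝ) → ℂ) :
    (Fin n → ℝ) × (Fin n → ℝ) → ℂ :=
  fun x => ∑ j, e j * pzbar n j f x

lemma zForm_zero (c : Fin n → ℂ) : zForm c 0 = 0 := by simp [zForm, zc]

lemma zbarForm_zero (d : Fin n → ℂ) : zbarForm d 0 = 0 := by simp [zbarForm, zbarc]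

lemma sum_mul_of_eq_add_single {F G : Fin n → ℂ} {j : Fin n} {δ : ℂ}
    (h : ∀ k, F k = G k + if k = j then δ else 0) (c : Fin n → ℂ) :
    ∑ k, F k * c k = ∑ k, G k * c k + δ * c j := by
  simp [h, add_mul, Finset.sum_add_distrib, ite_mul]

section Update

variable (x : (Fin n → ℝ) × (Fin n → ℝ)) (j : Fin n) (u : ℝ)

lemma zForm_update_fst (c : Fin n → ℂ) :
    zForm c (update x.1 j u, x.2) = zForm c x + (u - x.1 j) * c j := by
  refine sum_mul_of_eq_add_single (fun k => ?_) c
  rcases eq_or_ne k j with rfl | hk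
  · rw [if_pos rfl]; simp only [zc, update_self]; ring
  · simp [zc, hk]

lemma zForm_update_snd (c : Fin n → ℂ) :
    zForm c (x.1, update x.2 j u) = zForm c x + (u - x.2 j) * (I * c j) := by
  rw [← mul_assoc, mul_comm _ I]
  refine sum_mul_of_eq_add_single (fun k => ?_) c
  rcases eq_or_ne k j with rfl | hk
  · rw [if_pos rfl]; simp only [zc, update_self]; ring
  · simp [zc, hk]

lemma zbarForm_update_fst (d : Fin n → ℂ) :
    zbarForm d (update x.1 j u, x.2) = zbarForm d x + (u - x.1 j) * d j := by
  refine sum_mul_of_eq_add_single (fun k => ?_) d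
  rcases eq_or_ne k j with rfl | hk
  · rw [if_pos rfl]; simp only [zbarc, update_self]; ring
  · simp [zbarc, hk]

lemma zbarForm_update_snd (d : Fin n → ℂ) :
    zbarForm d (x.1, update x.2 j u) = zbarForm d x + (u - x.2 j) * (-I * d j) := by
  rw [← mul_assoc, mul_comm _ (-I)]
  refine sum_mul_of_eq_add_single (fun k => ?_) d
  rcases eq_or_ne k j with rfl | hk
  · rw [if_pos rfl]; simp only [zbarc, update_self]; ring
  · simp [zbarc, hk]

end Update

variable (K : ℂ) (c d : Fin n → ℂ) (a b : ℕ)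

section Wirtinger

variable (x : (Fin n → ℝ) × (Fin n → ℝ)) (j : Fin n)

lemma deriv_monomial_update_fst :
    deriv (fun u : ℝ => K * zForm c (update x.1 j u, x.2) ^ a
        * zbarForm d (update x.1 j u, x.2) ^ b) (x.1 j)
      = K * (a * c j * zForm c x ^ (a - 1) * zbarForm d x ^ b
        + b * d j * zForm c x ^ a * zbarForm d x ^ (b - 1)) := by
  simp only [zForm_update_fst, zbarForm_update_fst]
  exact (hasDerivAt_mul_affine_pow_mul_affine_pow ..).deriv

lemma deriv_monomial_update_snd :
    deriv (fun u : ℝ => K * zForm c (x.1, update x.2 j u) ^ a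
        * zbarForm d (x.1, update x.2 j u) ^ b) (x.2 j)
      = K * (a * (I * c j) * zForm c x ^ (a - 1) * zbarForm d x ^ b
        + b * (-I * d j) * zForm c x ^ a * zbarForm d x ^ (b - 1)) := by
  simp only [zForm_update_snd, zbarForm_update_snd]
  exact (hasDerivAt_mul_affine_pow_mul_affine_pow ..).deriv

lemma pz_monomial :
    pz n j (fun y => K * zForm c y ^ a * zbarForm d y ^ b) x
      = K * a * c j * zForm c x ^ (a - 1) * zbarForm d x ^ b := by
  rw [pz, deriv_monomial_update_fst, deriv_monomial_update_snd]
  linear_combination (K / 2 * (b * d j * zForm c x ^ a * zbarForm d x ^ (b - 1)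
    - a * c j * zForm c x ^ (a - 1) * zbarForm d x ^ b)) * I_sq

lemma pzbar_monomial :
    pzbar n j (fun y => K * zForm c y ^ a * zbarForm d y ^ b) x
      = K * b * d j * zForm c x ^ a * zbarForm d x ^ (b - 1) := by
  rw [pzbar, deriv_monomial_update_fst, deriv_monomial_update_snd]
  linear_combination (K / 2 * (a * c j * zForm c x ^ (a - 1) * zbarForm d x ^ b
    - b * d j * zForm c x ^ a * zbarForm d x ^ (b - 1))) * I_sq

end Wirtinger

lemma pzDir_iterate_monomial (e : Fin n → ℂ) (p : ℕ) :
    (pzDir e)^[p] (fun y => K * zForm c y ^ a * zbarForm d y ^ b)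
      = fun y => K * a.descFactorial p * (∑ j, e j * c j) ^ p
          * zForm c y ^ (a - p) * zbarForm d y ^ b := by
  induction p with
  | zero => simp
  | succ p ih =>
    funext y
    simp only [iterate_succ_apply', ih, pzDir, pz_monomial, Nat.descFactorial_succ, Nat.sub_sub,
      pow_succ, Finset.mul_sum, Finset.sum_mul]
    push_cast
    exact Finset.sum_congr rfl fun j _ => by ring

lemma pzbarDir_iterate_monomial (e : Fin n → ℂ) (q : ℕ) :
    (pzbarDir e)^[q] (fun y => K * zForm c y ^ a * zbarForm d y ^ b)
      = fun y => K * b.descFactorial q * (∑ j, e j * d j) ^ q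
          * zForm c y ^ a * zbarForm d y ^ (b - q) := by
  induction q with
  | zero => simp
  | succ q ih =>
    funext y
    simp only [iterate_succ_apply', ih, pzbarDir, pzbar_monomial, Nat.descFactorial_succ,
      Nat.sub_sub, pow_succ, Finset.mul_sum, Finset.sum_mul]
    push_cast
    exact Finset.sum_congr rfl fun j _ => by ring

end PlaneWaves

/-- `conj(f^{(p,q)}(∂)) = ⟨∂_z, s+t⟩^p ⟨∂_{z̄}, conj(s−t)⟩^q` is applied to
`f^{(w,v)}(z) = ⟨z, conj(s+t)⟩^w ⟨z̄, s−t⟩^v` and evaluated at `z = 0`. -/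
theorem stmt3 (n : ℕ) (t s : Fin n → ℂ)
    (ht : ∑ j, t j * (starRingEnd ℂ) (t j) = 1)
    (hs : ∑ j, s j * (starRingEnd ℂ) (s j) = 1)
    (hts : ∑ j, t j * (starRingEnd ℂ) (s j) = 0)
    (p q w v : ℕ) :
    ((fun f => fun x => ∑ j, (s j + t j) * pz n j f x)^[p]
      ((fun f => fun x => ∑ j, (starRingEnd ℂ) (s j - t j) * pzbar n j f x)^[q]
        (fun x => (∑ j, zc n j x * (starRingEnd ℂ) (s j + t j)) ^ w
          * (∑ j, zbarc n j x * (s j - t j)) ^ v))) (0, 0)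
      = if p = w ∧ q = v then 2 ^ (p + q) * (p.factorial : ℂ) * (q.factorial : ℂ)
        else 0 := by
  obtain ⟨hplus, hminus⟩ := sum_mul_conj_add_and_sub_eq_two ht hs hts
  have hwave : (fun x => zForm (fun j => conj (s j + t j)) x ^ w
        * zbarForm (fun j => s j - t j) x ^ v)
      = fun x => 1 * zForm (fun j => conj (s j + t j)) x ^ w
        * zbarForm (fun j => s j - t j) x ^ v := by
    simp only [one_mul]
  change (pzDir (fun j => s j + t j))^[p] ((pzbarDir (fun j => conj (s j - t j)))^[q]
    (fun x => zForm (fun j => conj (s j + t j)) x ^ w * zbarForm (fun j => s j - t j) x ^ v)) 0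
    = _
  rw [hwave, pzbarDir_iterate_monomial, pzDir_iterate_monomial]
  simp only [zForm_zero, zbarForm_zero, hplus, hminus]
  calc _ = ((w.descFactorial p : ℂ) * 0 ^ (w - p)) * ((v.descFactorial q : ℂ) * 0 ^ (v - q))
        * 2 ^ (p + q) := by ring
    _ = _ := by
      rw [descFactorial_mul_zero_pow, descFactorial_mul_zero_pow]
      split_ifs <;> simp_all
      ring
end

section
/- Let t, s ∈ ℂⁿ be unit vectors with ⟨t, s̄⟩ = 0, and let n ≥ 1. For z, u ∈ ℂⁿ with |z| ≤ 1 and |u| < 1, the double series K_{t,s}(z,u) = Σ_{p,q≥0} ((n)_{p+q} / (2^{p+q} p! q!)) ⟨z, \overline{s+t}⟩^p ⟨z̄, s−t⟩^q ⟨ū, s+t⟩^p ⟨u, \overline{s−t}⟩^q converges absolutely, where (n)_k = Γ(n+k)/Γ(n) is the Pochhammer symbol. -/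
/-!
The terms are equal to those of the Appell series `F₂` evaluated at
`x = |⟨z, s+t⟩| |⟨u, s+t⟩| / 2` and `y = |⟨z, s−t⟩| |⟨u, s−t⟩| / 2`. Grouped by `k = p + q`, that
series becomes the binomial series `Σ (n)_k (x + y)^k / k!`, which converges for `x + y < 1`.
Because `s` and `t` are orthonormal, the parallelogram law together with Bessel's inequality gives
`|⟨w, s+t⟩|² + |⟨w, s−t⟩|² ≤ 2 |w|²`, so by Cauchy–Schwarz in `ℝ²` we get `x + y ≤ |z| |u| < 1`.
-/

open Finset WithLp

theorem summable_iff_summable_sum_antidiagonal_of_nonneg {A : Type*} [AddCommMonoid A]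
    [HasAntidiagonal A] {f : A × A → ℝ} (hf : 0 ≤ f) :
    Summable f ↔ Summable fun n ↦ ∑ kl ∈ antidiagonal n, f kl := by
  refine HasAntidiagonal.sigmaAntidiagonalEquivProd.summable_iff.symm.trans <|
    (summable_sigma_of_nonneg fun _ ↦ hf _).trans ?_
  simp [Summable.of_finite, sum_attach]

theorem sum_antidiagonal_ascFactorial_div_mul_pow (n k : ℕ) (x y : ℝ) :
    ∑ pq ∈ antidiagonal k,
        (n.ascFactorial (pq.1 + pq.2) : ℝ) / (pq.1.factorial * pq.2.factorial) * x ^ pq.1 * y ^ pq.2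
      = (n.ascFactorial k : ℝ) / k.factorial * (x + y) ^ k := by
  rw [(Commute.all x y).add_pow', mul_sum]
  refine sum_congr rfl fun pq hpq ↦ ?_
  rw [HasAntidiagonal.mem_antidiagonal] at hpq
  subst hpq
  have hchoose : ((pq.1 + pq.2).choose pq.2 : ℝ) ≠ 0 :=
    Nat.cast_ne_zero.mpr (Nat.choose_pos (Nat.le_add_left _ _)).ne'
  rw [nsmul_eq_mul, ← Nat.add_choose_mul_factorial_mul_factorial, Nat.choose_symm_add]
  push_cast
  field_simp

theorem summable_ascFactorial_div_factorial_mul_geometric (n : ℕ) {r : ℝ} (hr₀ : 0 ≤ r)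
    (hr₁ : r < 1) :
    Summable fun k : ℕ ↦ (n.ascFactorial k : ℝ) / k.factorial * r ^ k := by
  refine (summable_choose_mul_geometric_of_norm_lt_one n
    (by rwa [Real.norm_of_nonneg hr₀])).of_nonneg_of_le (fun k ↦ by positivity) fun k ↦ ?_
  have hchoose : (n + k - 1).choose k ≤ (k + n).choose n := by
    rw [add_comm k, Nat.choose_symm_add]
    exact Nat.choose_le_choose k (by omega)
  rw [Nat.ascFactorial_eq_factorial_mul_choose', Nat.cast_mul,
    mul_div_cancel_left₀ _ (by positivity)]
  gcongr

theorem summable_appellF2_of_add_lt_one (n : ℕ) {x y : ℝ} (hx : 0 ≤ x) (hy : 0 ≤ y)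
    (hxy : x + y < 1) :
    Summable fun pq : ℕ × ℕ ↦
      (n.ascFactorial (pq.1 + pq.2) : ℝ) / (pq.1.factorial * pq.2.factorial)
        * x ^ pq.1 * y ^ pq.2 := by
  rw [summable_iff_summable_sum_antidiagonal_of_nonneg fun _ ↦ by positivity]
  simp_rw [sum_antidiagonal_ascFactorial_div_mul_pow]
  exact summable_ascFactorial_div_factorial_mul_geometric n (by positivity) hxy

theorem summable_norm_ascFactorial_div_two_pow_mul {𝕜 : Type*} [RCLike 𝕜] (n : ℕ) {a b c d : 𝕜}
    (h : ‖a‖ * ‖c‖ + ‖b‖ * ‖d‖ < 2) :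
    Summable fun pq : ℕ × ℕ ↦
      ‖(n.ascFactorial (pq.1 + pq.2) : 𝕜) / (2 ^ (pq.1 + pq.2) * pq.1.factorial * pq.2.factorial)
        * a ^ pq.1 * b ^ pq.2 * c ^ pq.1 * d ^ pq.2‖ := by
  convert summable_appellF2_of_add_lt_one n (x := ‖a‖ * ‖c‖ / 2) (y := ‖b‖ * ‖d‖ / 2)
    (by positivity) (by positivity) (by linarith) using 2 with pq
  simp only [norm_mul, norm_div, norm_pow, RCLike.norm_natCast, RCLike.norm_ofNat, div_pow,
    mul_pow, pow_add]
  ring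

section
variable {𝕜 E : Type*} [RCLike 𝕜] [NormedAddCommGroup E] [InnerProductSpace 𝕜 E]
local notation "⟪" x ", " y "⟫" => inner 𝕜 x y

theorem Orthonormal.norm_inner_add_sq_add_norm_inner_sub_sq_le {s t : E}
    (hst : Orthonormal 𝕜 ![s, t]) (x : E) :
    ‖⟪s + t, x⟫‖ ^ 2 + ‖⟪s - t, x⟫‖ ^ 2 ≤ 2 * ‖x‖ ^ 2 := by
  have hbessel := hst.sum_inner_products_le x (s := univ)
  rw [Fin.sum_univ_two] at hbessel
  rw [inner_add_left, inner_sub_left, parallelogram_law_with_norm 𝕜]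
  simpa using hbessel

theorem Orthonormal.norm_inner_add_mul_add_norm_inner_sub_mul_le {s t : E}
    (hst : Orthonormal 𝕜 ![s, t]) (x y : E) :
    ‖⟪s + t, x⟫‖ * ‖⟪s + t, y⟫‖ + ‖⟪s - t, x⟫‖ * ‖⟪s - t, y⟫‖ ≤ 2 * (‖x‖ * ‖y‖) := by
  have hx := hst.norm_inner_add_sq_add_norm_inner_sub_sq_le x
  have hy := hst.norm_inner_add_sq_add_norm_inner_sub_sq_le y
  refine (pow_le_pow_iff_left₀ (by positivity) (by positivity) two_ne_zero).mp ?_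
  calc (‖⟪s + t, x⟫‖ * ‖⟪s + t, y⟫‖ + ‖⟪s - t, x⟫‖ * ‖⟪s - t, y⟫‖) ^ 2
      ≤ (‖⟪s + t, x⟫‖ ^ 2 + ‖⟪s - t, x⟫‖ ^ 2) * (‖⟪s + t, y⟫‖ ^ 2 + ‖⟪s - t, y⟫‖ ^ 2) := by
        nlinarith [sq_nonneg (‖⟪s + t, x⟫‖ * ‖⟪s - t, y⟫‖ - ‖⟪s - t, x⟫‖ * ‖⟪s + t, y⟫‖)]
    _ ≤ (2 * ‖x‖ ^ 2) * (2 * ‖y‖ ^ 2) := by gcongr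
    _ = (2 * (‖x‖ * ‖y‖)) ^ 2 := by ring

end

theorem stmt6_general (n : ℕ) (t s z u : Fin n → ℂ)
    (ht : ∑ j, t j * (starRingEnd ℂ) (t j) = 1)
    (hs : ∑ j, s j * (starRingEnd ℂ) (s j) = 1)
    (hts : ∑ j, t j * (starRingEnd ℂ) (s j) = 0)
    (hz : ∑ j, Complex.normSq (z j) ≤ 1)
    (hu : ∑ j, Complex.normSq (u j) < 1) :
    Summable (fun pq : ℕ × ℕ =>
      ‖((Nat.ascFactorial n (pq.1 + pq.2) : ℂ) /
          (2 ^ (pq.1 + pq.2) * (pq.1.factorial : ℂ) * (pq.2.factorial : ℂ)))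
        * (∑ j, z j * (starRingEnd ℂ) (s j + t j)) ^ pq.1
        * (∑ j, (starRingEnd ℂ) (z j) * (s j - t j)) ^ pq.2
        * (∑ j, (starRingEnd ℂ) (u j) * (s j + t j)) ^ pq.1
        * (∑ j, u j * (starRingEnd ℂ) (s j - t j)) ^ pq.2‖) := by
  have hst : Orthonormal ℂ ![toLp 2 s, toLp 2 t] := by
    have hST : inner ℂ (toLp 2 s) (toLp 2 t) = 0 := hts
    have hTS : inner ℂ (toLp 2 t) (toLp 2 s) = 0 := by rw [← inner_conj_symm, hST, map_zero]
    rw [orthonormal_iff_ite]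
    intro i j
    fin_cases i <;> fin_cases j
    exacts [hs, hST, hTS, ht]
  have hnorm (v : Fin n → ℂ) : ‖toLp 2 v‖ ^ 2 = ∑ j, Complex.normSq (v j) := by
    simp [EuclideanSpace.norm_sq_eq, Complex.normSq_eq_norm_sq]
  have hz' : ‖toLp 2 z‖ ≤ 1 := by
    rw [← sq_le_one_iff₀ (norm_nonneg _), hnorm]; exact hz
  have hu' : ‖toLp 2 u‖ < 1 := by
    rw [← sq_lt_one_iff₀ (norm_nonneg _), hnorm]; exact hu
  have hconj (v w : Fin n → ℂ) :
      ‖∑ j, (starRingEnd ℂ) (v j) * w j‖ = ‖∑ j, v j * (starRingEnd ℂ) (w j)‖ := by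
    rw [← Complex.norm_conj, map_sum]
    simp [mul_comm]
  refine summable_norm_ascFactorial_div_two_pow_mul n ?_
  -- `∑ j, v j * conj (w j)` is `⟪toLp 2 w, toLp 2 v⟫` by definition.
  rw [hconj z, hconj u]
  calc _ ≤ 2 * (‖toLp 2 z‖ * ‖toLp 2 u‖) :=
        hst.norm_inner_add_mul_add_norm_inner_sub_mul_le (toLp 2 z) (toLp 2 u)
    _ < 2 := by
      have := mul_le_of_le_one_left (norm_nonneg (toLp 2 u)) hz'
      linarith

/-- Absolute convergence of the Szegő–Radon kernel series
`K_{t,s}(z,u) = Σ_{p,q} ((n)_{p+q}/(2^{p+q} p! q!)) ⟨z, conj(s+t)⟩^p ⟨z̄, s−t⟩^q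
⟨ū, s+t⟩^p ⟨u, conj(s−t)⟩^q` for `|z| ≤ 1`, `|u| < 1`. -/
theorem stmt6 (n : ℕ) (hn : 1 ≤ n) (t s z u : Fin n → ℂ)
    (ht : ∑ j, t j * (starRingEnd ℂ) (t j) = 1)
    (hs : ∑ j, s j * (starRingEnd ℂ) (s j) = 1)
    (hts : ∑ j, t j * (starRingEnd ℂ) (s j) = 0)
    (hz : ∑ j, Complex.normSq (z j) ≤ 1)
    (hu : ∑ j, Complex.normSq (u j) < 1) :
    Summable (fun pq : ℕ × ℕ =>
      ‖((Nat.ascFactorial n (pq.1 + pq.2) : ℂ) /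
          (2 ^ (pq.1 + pq.2) * (pq.1.factorial : ℂ) * (pq.2.factorial : ℂ)))
        * (∑ j, z j * (starRingEnd ℂ) (s j + t j)) ^ pq.1
        * (∑ j, (starRingEnd ℂ) (z j) * (s j - t j)) ^ pq.2
        * (∑ j, (starRingEnd ℂ) (u j) * (s j + t j)) ^ pq.1
        * (∑ j, u j * (starRingEnd ℂ) (s j - t j)) ^ pq.2‖) :=
  stmt6_general n t s z u ht hs hts hz hu
end

section
/- Let t, s ∈ ℂⁿ be unit vectors with ⟨t, s̄⟩ = 0, and set \underline{t} = Σⱼ fⱼ tⱼ, \underline{s} = Σⱼ fⱼ sⱼ in the complex Clifford algebra ℂ_{2n} with Witt basis. Define τ = (\underline{t} − \underline{s})(\underline{t}† + \underline{s}†). Then τ² = 0 and ττ†τ = 4τ. -/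
open Complex

lemma half_zero {A : Type*} [AddCommGroup A] [Module ℂ A] {z : A}
    (h : z + z = 0) : z = 0 := by
  have h2 : (2 : ℂ) • z = 0 := by rw [two_smul]; exact h
  have := congrArg (fun w => (2⁻¹ : ℂ) • w) h2
  simpa [smul_smul] using this

lemma sum_anticomm {n : ℕ} {A : Type*} [Ring A] [Algebra ℂ A]
    (a b : Fin n → ℂ) (u v : Fin n → A) (c : Fin n → Fin n → ℂ)
    (h : ∀ j k, u j * v k + v k * u j = algebraMap ℂ A (c j k)) :
    (∑ j, a j • u j) * (∑ k, b k • v k) + (∑ k, b k • v k) * (∑ j, a j • u j)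
      = algebraMap ℂ A (∑ j, ∑ k, a j * b k * c j k) := by
  rw [Finset.sum_mul_sum, Finset.sum_mul_sum]
  rw [Finset.sum_comm (s := Finset.univ) (t := Finset.univ)
    (f := fun k j => (b k • v k) * (a j • u j))]
  rw [← Finset.sum_add_distrib]
  rw [map_sum]
  refine Finset.sum_congr rfl fun j _ => ?_
  rw [← Finset.sum_add_distrib, map_sum]
  refine Finset.sum_congr rfl fun k _ => ?_
  have e1 : (a j • u j) * (b k • v k) = (a j * b k) • (u j * v k) := by
    rw [smul_mul_assoc, mul_smul_comm, smul_smul]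
  have e2 : (b k • v k) * (a j • u j) = (a j * b k) • (v k * u j) := by
    rw [smul_mul_assoc, mul_smul_comm, smul_smul, mul_comm (a j)]
  rw [e1, e2, ← smul_add, h, Algebra.smul_def, ← map_mul]

lemma key_calc {A : Type*} [Ring A] [Algebra ℂ A] (x y p q : A)
    (hxx : x * x = 0) (hyy : y * y = 0)
    (hyx : y * x + x * y = 0)
    (hyq : y * q + q * y = 0)
    (hyp : y * p + p * y = algebraMap ℂ A 2)
    (hxq : x * q + q * x = algebraMap ℂ A 2) :
    (x * y) * (x * y) = 0 ∧
      (x * y) * (p * q) * (x * y) = (4 : ℂ) • (x * y) := by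
  have h2 : algebraMap ℂ A 2 = (2 : ℂ) • (1 : A) := Algebra.algebraMap_eq_smul_one 2
  rw [h2] at hyp hxq
  have hyx' : y * x = -(x * y) := by linear_combination (norm := noncomm_ring) hyx
  have hyq' : y * q = -(q * y) := by linear_combination (norm := noncomm_ring) hyq
  have hyp' : y * p = (2 : ℂ) • (1 : A) - p * y := eq_sub_of_add_eq hyp
  have hxq' : x * q = (2 : ℂ) • (1 : A) - q * x := eq_sub_of_add_eq hxq
  constructor
  · calc (x * y) * (x * y) = x * (y * x) * y := by noncomm_ring
    _ = x * (-(x * y)) * y := by rw [hyx']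
    _ = -((x * x) * (y * y)) := by noncomm_ring
    _ = 0 := by rw [hxx]; simp
  · calc (x * y) * (p * q) * (x * y)
        = x * (y * p) * (q * (x * y)) := by noncomm_ring
      _ = x * ((2 : ℂ) • (1 : A) - p * y) * (q * (x * y)) := by rw [hyp']
      _ = (2 : ℂ) • (x * (q * (x * y))) - x * p * ((y * q) * (x * y)) := by
          noncomm_ring
      _ = (2 : ℂ) • (x * (q * (x * y))) - x * p * (-(q * y) * (x * y)) := by
          rw [hyq']
      _ = (2 : ℂ) • ((x * q) * (x * y)) + x * (p * (q * ((y * x) * y))) := by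
          noncomm_ring
      _ = (2 : ℂ) • (((2 : ℂ) • (1 : A) - q * x) * (x * y))
            + x * (p * (q * (-(x * y) * y))) := by rw [hxq', hyx']
      _ = (2 : ℂ) • ((2 : ℂ) • (x * y)) - (2 : ℂ) • (q * ((x * x) * y))
            - x * (p * (q * (x * (y * y)))) := by
          noncomm_ring
          module
      _ = (4 : ℂ) • (x * y) := by
          rw [hxx, hyy, smul_smul]
          norm_num

/-- For Hermitian-orthonormal `t, s ∈ ℂⁿ`, the Clifford element
`τ = (t̲ − s̲)(t̲† + s̲†)` built from the Witt basis satisfies `τ² = 0` and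
`ττ†τ = 4τ`, where `τ† = (t̲ + s̲)(t̲† − s̲†)`. -/
theorem stmt18 (n : ℕ) {A : Type*} [Ring A] [Algebra ℂ A]
    (f fd : Fin n → A)
    (hff : ∀ j k, f j * f k + f k * f j = 0)
    (hfdfd : ∀ j k, fd j * fd k + fd k * fd j = 0)
    (hffd : ∀ j k, f j * fd k + fd k * f j =
      algebraMap ℂ A (if j = k then 1 else 0))
    (t s : Fin n → ℂ)
    (ht : ∑ j, t j * (starRingEnd ℂ) (t j) = 1)
    (hs : ∑ j, s j * (starRingEnd ℂ) (s j) = 1)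
    (hts : ∑ j, t j * (starRingEnd ℂ) (s j) = 0) :
    letI ut : A := ∑ j, t j • f j
    letI us : A := ∑ j, s j • f j
    letI utd : A := ∑ j, (starRingEnd ℂ) (t j) • fd j
    letI usd : A := ∑ j, (starRingEnd ℂ) (s j) • fd j
    letI τ : A := (ut - us) * (utd + usd)
    letI τd : A := (ut + us) * (utd - usd)
    τ * τ = 0 ∧ τ * τd * τ = (4 : ℂ) • τ := by
  set ut : A := ∑ j, t j • f j with hut
  set us : A := ∑ j, s j • f j with hus
  set utd : A := ∑ j, (starRingEnd ℂ) (t j) • fd j with hutd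
  set usd : A := ∑ j, (starRingEnd ℂ) (s j) • fd j with husd
  -- anticommutator of f-combinations is zero
  have hB : ∀ a b : Fin n → ℂ,
      (∑ j, a j • f j) * (∑ k, b k • f k)
        + (∑ k, b k • f k) * (∑ j, a j • f j) = 0 := by
    intro a b
    have := sum_anticomm a b f f (fun _ _ => 0) (by
      intro j k; rw [hff]; simp)
    simpa using this
  have hC : ∀ a b : Fin n → ℂ,
      (∑ j, a j • fd j) * (∑ k, b k • fd k)
        + (∑ k, b k • fd k) * (∑ j, a j • fd j) = 0 := by
    intro a b
    have := sum_anticomm a b fd fd (fun _ _ => 0) (by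
      intro j k; rw [hfdfd]; simp)
    simpa using this
  have hA : ∀ a b : Fin n → ℂ,
      (∑ j, a j • f j) * (∑ k, b k • fd k)
        + (∑ k, b k • fd k) * (∑ j, a j • f j)
        = algebraMap ℂ A (∑ j, a j * b j) := by
    intro a b
    have := sum_anticomm a b f fd (fun j k => if j = k then 1 else 0)
      (fun j k => hffd j k)
    rw [this]
    congr 1
    simp [mul_ite, Finset.sum_ite_eq']
  have hst : ∑ j, s j * (starRingEnd ℂ) (t j) = 0 := by
    have := congrArg (starRingEnd ℂ) hts
    simpa [map_sum, mul_comm] using this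
  -- concrete anticommutators
  have c1 : ut * utd + utd * ut = 1 := by
    have := hA t (fun j => (starRingEnd ℂ) (t j)); rw [ht, map_one] at this
    exact this
  have c2 : ut * usd + usd * ut = 0 := by
    have := hA t (fun j => (starRingEnd ℂ) (s j)); rw [hts, map_zero] at this
    exact this
  have c3 : us * utd + utd * us = 0 := by
    have := hA s (fun j => (starRingEnd ℂ) (t j)); rw [hst, map_zero] at this
    exact this
  have c4 : us * usd + usd * us = 1 := by
    have := hA s (fun j => (starRingEnd ℂ) (s j)); rw [hs, map_one] at this
    exact this
  have htt : ut * ut = 0 := half_zero (hB t t)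
  have hss : us * us = 0 := half_zero (hB s s)
  have htus : ut * us + us * ut = 0 := hB t s
  have htdtd : utd * utd = 0 :=
    half_zero (hC (fun j => (starRingEnd ℂ) (t j)) (fun j => (starRingEnd ℂ) (t j)))
  have hsdsd : usd * usd = 0 :=
    half_zero (hC (fun j => (starRingEnd ℂ) (s j)) (fun j => (starRingEnd ℂ) (s j)))
  have htdsd : utd * usd + usd * utd = 0 :=
    hC (fun j => (starRingEnd ℂ) (t j)) (fun j => (starRingEnd ℂ) (s j))
  -- relations for x = ut - us, y = utd + usd, p = ut + us, q = utd - usd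
  have hxx : (ut - us) * (ut - us) = 0 := by
    have e : (ut - us) * (ut - us)
        = ut * ut + us * us - (ut * us + us * ut) := by noncomm_ring
    rw [e, htt, hss, htus]; simp
  have hyy : (utd + usd) * (utd + usd) = 0 := by
    have e : (utd + usd) * (utd + usd)
        = utd * utd + usd * usd + (utd * usd + usd * utd) := by noncomm_ring
    rw [e, htdtd, hsdsd, htdsd]; simp
  have hyx : (utd + usd) * (ut - us) + (ut - us) * (utd + usd) = 0 := by
    have e : (utd + usd) * (ut - us) + (ut - us) * (utd + usd)
        = (ut * utd + utd * ut) + (ut * usd + usd * ut)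
          - (us * utd + utd * us) - (us * usd + usd * us) := by noncomm_ring
    rw [e, c1, c2, c3, c4]; simp
  have hyq : (utd + usd) * (utd - usd) + (utd - usd) * (utd + usd) = 0 := by
    have e : (utd + usd) * (utd - usd) + (utd - usd) * (utd + usd)
        = 2 * (utd * utd) - 2 * (usd * usd) := by noncomm_ring
    rw [e, htdtd, hsdsd]; simp
  have hyp : (utd + usd) * (ut + us) + (ut + us) * (utd + usd)
      = algebraMap ℂ A 2 := by
    have e : (utd + usd) * (ut + us) + (ut + us) * (utd + usd)
        = (ut * utd + utd * ut) + (ut * usd + usd * ut)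
          + (us * utd + utd * us) + (us * usd + usd * us) := by noncomm_ring
    rw [e, c1, c2, c3, c4]
    rw [map_ofNat]
    norm_num
  have hxq : (ut - us) * (utd - usd) + (utd - usd) * (ut - us)
      = algebraMap ℂ A 2 := by
    have e : (ut - us) * (utd - usd) + (utd - usd) * (ut - us)
        = (ut * utd + utd * ut) - (ut * usd + usd * ut)
          - (us * utd + utd * us) + (us * usd + usd * us) := by noncomm_ring
    rw [e, c1, c2, c3, c4]
    rw [map_ofNat]
    norm_num
  have := key_calc (ut - us) (utd + usd) (ut + us) (utd - usd)
    hxx hyy hyx hyq hyp hxq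
  exact this
end
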